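/- arXiv:2506.22778 — 5 statements merged into one kernel-verified Lean document; each statement's English description precedes it below -/
import Mathlib

section
/- Let T be a string of length n and T' the string obtained from T by substituting the character at position i (with T'[j] = T[j] for j ≠ i). Then γ(T') ≤ γ(T) + O(√n); more precisely there is a constant C such that γ(T') ≤ γ(T) + C·√n for all n ≥ 1. -/
/-!
Let `Γ` be a smallest attractor of `T = u ++ a :: v` and `i = |u| + 1` the substituted position.
For `T'` add to `Γ` the position `i`, which hits every window through `i`; the multiples of `s`,
which hit every window of length at least `s`; and, for each of the `s` left ends `l ∈ (i - s, i]`,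
one position inside an occurrence avoiding `i` of the longest short window `[l, r] ∋ i` of `T` that
has such an occurrence. A short window of `T'` avoiding `i` reads the same in `T`, where some
occurrence of it hits `Γ`; if that occurrence crosses `i`, the window itself is an occurrence of it
avoiding `i`, so the position added for its left end lies in a copy that survives in `T'`. Hence
`γ(T') ≤ γ(T) + n / s + s + 1`, and `s = ⌊√n⌋ + 1` gives `γ(T') ≤ γ(T) + 4√n`.
-/

def subStr {α : Type*} (W : List α) (l r : ℕ) : List α :=
  (W.drop (l - 1)).take (r - l + 1)

def IsAttractor {α : Type*} (W : List α) (Γ : Set ℕ) : Prop :=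
  ∀ l r : ℕ, 1 ≤ l → l ≤ r → r ≤ W.length →
    ∃ l' r' p : ℕ, 1 ≤ l' ∧ l' ≤ r' ∧ r' ≤ W.length ∧
      subStr W l' r' = subStr W l r ∧ p ∈ Γ ∧ l' ≤ p ∧ p ≤ r'

noncomputable def gammaAttr {α : Type*} (T : List α) : ℕ :=
  sInf {k | ∃ Γ : Finset ℕ, ↑Γ ⊆ Set.Icc 1 T.length ∧ IsAttractor T ↑Γ ∧ Γ.card = k}

lemma exists_dvd_mem_Icc_of_add_le {s l r : ℕ} (hs : 0 < s) (h : l + s ≤ r + 1) :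
    ∃ p, s ∣ p ∧ l ≤ p ∧ p ≤ r := by
  refine ⟨r / s * s, dvd_mul_left s _, ?_, Nat.div_mul_le_self r s⟩
  have := Nat.div_add_mod r s
  have := Nat.mod_lt r hs
  rw [Nat.mul_comm]
  omega

lemma div_sqrt_add_one_le_sqrt (n : ℕ) : n / (Nat.sqrt n + 1) ≤ Nat.sqrt n :=
  Nat.lt_succ_iff.1 <| (Nat.div_lt_iff_lt_mul (Nat.succ_pos _)).2 (Nat.lt_succ_sqrt n)

section

variable {α : Type*}

lemma length_subStr (W : List α) {l r : ℕ} (hl : 1 ≤ l) (hlr : l ≤ r) (hr : r ≤ W.length) :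
    (subStr W l r).length = r - l + 1 := by
  simp only [subStr, List.length_take, List.length_drop]
  omega

lemma take_subStr_of_le (W : List α) (l : ℕ) {r r' : ℕ} (h : r ≤ r') :
    (subStr W l r').take (r - l + 1) = subStr W l r := by
  rw [subStr, subStr, List.take_take]
  congr 1
  omega

lemma subStr_append_cons_eq {u v : List α} (a b : α) {l r : ℕ} (hl : 1 ≤ l) (hlr : l ≤ r)
    (h : r ≤ u.length ∨ u.length + 1 < l) :
    subStr (u ++ b :: v) l r = subStr (u ++ a :: v) l r := by
  rcases h with h | h
  · have key : ∀ W : List α, subStr W l r = ((W.take r).drop (l - 1)).take (r - l + 1) := by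
      intro W
      rw [List.drop_take, List.take_take, subStr]
      congr 1
      omega
    rw [key, key, List.take_append_of_le_length h, List.take_append_of_le_length h]
  · have key : ∀ c : α,
        subStr (u ++ c :: v) l r = (v.drop (l - 1 - (u.length + 1))).take (r - l + 1) := by
      intro c
      rw [subStr, show l - 1 = u.length + 1 + (l - 1 - (u.length + 1)) by omega, ← List.drop_drop]
      simp
    rw [key, key]

lemma isAttractor_Icc (T : List α) : IsAttractor T (Set.Icc 1 T.length) :=
  fun l r hl hlr hr => ⟨l, r, l, hl, hlr, hr, rfl, ⟨hl, hlr.trans hr⟩, le_rfl, hlr⟩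

lemma exists_isAttractor_card_eq_gammaAttr (T : List α) :
    ∃ Γ : Finset ℕ, ↑Γ ⊆ Set.Icc 1 T.length ∧ IsAttractor T ↑Γ ∧ Γ.card = gammaAttr T :=
  Nat.sInf_mem
    (s := {k | ∃ Γ : Finset ℕ, (Γ : Set ℕ) ⊆ Set.Icc 1 T.length ∧ IsAttractor T ↑Γ ∧ Γ.card = k})
    ⟨_, Finset.Icc 1 T.length, by simp, by simpa using isAttractor_Icc T, rfl⟩

lemma gammaAttr_le_card {T : List α} {Γ : Finset ℕ} (hsub : ↑Γ ⊆ Set.Icc 1 T.length)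
    (hΓ : IsAttractor T ↑Γ) : gammaAttr T ≤ Γ.card :=
  Nat.sInf_le ⟨Γ, hsub, hΓ, rfl⟩

/-- `l₀` starts an occurrence of `T[l..r]` in `T` whose window does not contain position `i`. -/
def IsOccurrenceAvoiding (T : List α) (i l r l₀ : ℕ) : Prop :=
  1 ≤ l₀ ∧ l₀ + (r - l) ≤ T.length ∧ (l₀ + (r - l) < i ∨ i < l₀) ∧
    subStr T l₀ (l₀ + (r - l)) = subStr T l r

lemma IsOccurrenceAvoiding.of_le {T : List α} {i l r r' l₀ : ℕ}
    (h : IsOccurrenceAvoiding T i l r' l₀) (hr : r ≤ r') : IsOccurrenceAvoiding T i l r l₀ := by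
  obtain ⟨h1, h2, h3, h4⟩ := h
  refine ⟨h1, by omega, by omega, ?_⟩
  have e := take_subStr_of_le T l₀ (show l₀ + (r - l) ≤ l₀ + (r' - l) by omega)
  rw [Nat.add_sub_cancel_left, h4, take_subStr_of_le T l hr] at e
  exact e.symm

def HitsAvoidingOccurrences (T : List α) (i s : ℕ) (F : Finset ℕ) : Prop :=
  ∀ l r, l ≤ i → i ≤ r → r < l + s → (∃ l₀, IsOccurrenceAvoiding T i l r l₀) →
    ∃ l₀ p, IsOccurrenceAvoiding T i l r l₀ ∧ p ∈ F ∧ l₀ ≤ p ∧ p ≤ l₀ + (r - l)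

/-- For a fixed left end `l`, one position suffices: avoiding occurrences of `T[l..r]` shrink to
avoiding occurrences of its prefixes, so the one for the largest admissible `r` serves all. -/
lemma exists_card_le_one_hitting (T : List α) (i l s : ℕ) :
    ∃ P : Finset ℕ, P.card ≤ 1 ∧ ↑P ⊆ Set.Icc 1 T.length ∧
      ∀ r, i ≤ r → r < l + s → (∃ l₀, IsOccurrenceAvoiding T i l r l₀) →
        ∃ l₀ p, IsOccurrenceAvoiding T i l r l₀ ∧ p ∈ P ∧ l₀ ≤ p ∧ p ≤ l₀ + (r - l) := by
  classical
  by_cases hex : ∃ r, i ≤ r ∧ r < l + s ∧ ∃ l₀, IsOccurrenceAvoiding T i l r l₀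
  · obtain ⟨r₀, hir₀, hr₀, hocc₀⟩ := hex
    set Occ := fun r => ∃ l₀, IsOccurrenceAvoiding T i l r l₀
    have hr₀max : r₀ ≤ Nat.findGreatest Occ (l + s) := Nat.le_findGreatest hr₀.le hocc₀
    obtain ⟨l₀, hl₀⟩ := Nat.findGreatest_spec (P := Occ) hr₀.le hocc₀
    refine ⟨{l₀ + (i - l)}, by simp, ?_, fun r hir hr hocc => ⟨l₀, l₀ + (i - l),
      hl₀.of_le (Nat.le_findGreatest hr.le hocc), by simp, by omega, by omega⟩⟩
    simp only [Finset.coe_singleton, Set.singleton_subset_iff, Set.mem_Icc]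
    have ⟨hpos, hlen, _⟩ := hl₀
    omega
  · exact ⟨∅, by simp, by simp, fun r hir hr hocc => absurd ⟨r, hir, hr, hocc⟩ hex⟩

lemma exists_hitsAvoidingOccurrences (T : List α) (i s : ℕ) :
    ∃ F : Finset ℕ, F.card ≤ s ∧ ↑F ⊆ Set.Icc 1 T.length ∧ HitsAvoidingOccurrences T i s F := by
  classical
  choose P hPcard hPsub hP using fun l => exists_card_le_one_hitting T i l s
  refine ⟨(Finset.Icc (i + 1 - s) i).biUnion P, ?_, ?_, ?_⟩
  · calc _ ≤ (Finset.Icc (i + 1 - s) i).card * 1 :=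
          Finset.card_biUnion_le_card_mul _ _ _ fun l _ => hPcard l
      _ ≤ s := by simp only [Nat.card_Icc, mul_one]; omega
  · simpa using fun l _ _ => hPsub l
  · intro l r hli hir hrl hocc
    obtain ⟨l₀, p, hl₀, hp, hle⟩ := hP l r hir hrl hocc
    exact ⟨l₀, p, hl₀, Finset.mem_biUnion.2 ⟨l, Finset.mem_Icc.2 ⟨by omega, hli⟩, hp⟩, hle⟩

lemma length_append_cons_eq (u v : List α) (a b : α) :
    (u ++ b :: v).length = (u ++ a :: v).length := by
  simp

lemma exists_occurrence_hitting_of_short {u v : List α} {a b : α} {s : ℕ} {Γ F : Finset ℕ}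
    (hΓ : IsAttractor (u ++ a :: v) ↑Γ)
    (hF : HitsAvoidingOccurrences (u ++ a :: v) (u.length + 1) s F)
    {l r : ℕ} (hl : 1 ≤ l) (hlr : l ≤ r) (hr : r ≤ (u ++ a :: v).length) (hshort : r + 1 < l + s)
    (havoid : r ≤ u.length ∨ u.length + 1 < l) :
    ∃ l' r' p, 1 ≤ l' ∧ l' ≤ r' ∧ r' ≤ (u ++ a :: v).length ∧
      subStr (u ++ b :: v) l' r' = subStr (u ++ b :: v) l r ∧ p ∈ Γ ∪ F ∧ l' ≤ p ∧ p ≤ r' := by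
  have hsame := subStr_append_cons_eq (v := v) a b hl hlr havoid
  obtain ⟨l', r', p, hl', hlr', hr', heq, hp, hl'p, hpr'⟩ := hΓ l r hl hlr hr
  by_cases hcross : l' ≤ u.length + 1 ∧ u.length + 1 ≤ r'
  · have hlen : r' - l' = r - l := by
      have := congrArg List.length heq
      rw [length_subStr _ hl' hlr' hr', length_subStr _ hl hlr hr] at this
      omega
    have hocc : IsOccurrenceAvoiding (u ++ a :: v) (u.length + 1) l' r' l :=
      ⟨hl, by omega, by omega, by rw [hlen, Nat.add_sub_of_le hlr, heq]⟩
    obtain ⟨l₀, q, ⟨hl₀, hlen₀, havoid₀, heq₀⟩, hq, hl₀q, hql₀⟩ :=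
      hF l' r' hcross.1 hcross.2 (by omega) ⟨l, hocc⟩
    refine ⟨l₀, l₀ + (r' - l'), q, hl₀, by omega, hlen₀, ?_, Finset.mem_union_right _ hq,
      hl₀q, hql₀⟩
    rw [subStr_append_cons_eq a b hl₀ (by omega) (by omega), heq₀, heq, hsame]
  · refine ⟨l', r', p, hl', hlr', hr', ?_, Finset.mem_union_left _ hp, hl'p, hpr'⟩
    rw [subStr_append_cons_eq a b hl' hlr' (by omega), heq, hsame]

theorem isAttractor_append_cons {u v : List α} {a b : α} {s : ℕ} (hs : 0 < s) {Γ F : Finset ℕ}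
    (hΓ : IsAttractor (u ++ a :: v) ↑Γ)
    (hF : HitsAvoidingOccurrences (u ++ a :: v) (u.length + 1) s F) :
    IsAttractor (u ++ b :: v)
      ↑(Γ ∪ F ∪ {u.length + 1} ∪ {p ∈ Finset.Ioc 0 (u ++ a :: v).length | s ∣ p}) := by
  intro l r hl hlr hr
  rw [length_append_cons_eq u v a b] at hr ⊢
  by_cases hcross : l ≤ u.length + 1 ∧ u.length + 1 ≤ r
  · exact ⟨l, r, u.length + 1, hl, hlr, hr, rfl, by simp, hcross.1, hcross.2⟩
  by_cases hlong : l + s ≤ r + 1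
  · obtain ⟨p, hsp, hlp, hpr⟩ := exists_dvd_mem_Icc_of_add_le hs hlong
    refine ⟨l, r, p, hl, hlr, hr, rfl, ?_, hlp, hpr⟩
    exact Finset.mem_union_right _
      (Finset.mem_filter.2 ⟨Finset.mem_Ioc.2 ⟨by omega, by omega⟩, hsp⟩)
  obtain ⟨l', r', p, hl', hlr', hr', heq, hp, hl'p, hpr'⟩ :=
    exists_occurrence_hitting_of_short hΓ hF hl hlr hr (by omega) (by omega)
  refine ⟨l', r', p, hl', hlr', hr', heq, ?_, hl'p, hpr'⟩
  exact Finset.mem_union_left _ (Finset.mem_union_left _ hp)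

theorem gammaAttr_append_cons_le (u v : List α) (a b : α) {s : ℕ} (hs : 0 < s) :
    gammaAttr (u ++ b :: v) ≤ gammaAttr (u ++ a :: v) + (u ++ a :: v).length / s + s + 1 := by
  classical
  obtain ⟨Γ, hΓsub, hΓ, hΓcard⟩ := exists_isAttractor_card_eq_gammaAttr (u ++ a :: v)
  obtain ⟨F, hFcard, hFsub, hF⟩ := exists_hitsAvoidingOccurrences (u ++ a :: v) (u.length + 1) s
  set R := {p ∈ Finset.Ioc 0 (u ++ a :: v).length | s ∣ p}
  have hsub : ↑(Γ ∪ F ∪ {u.length + 1} ∪ R) ⊆ Set.Icc 1 (u ++ b :: v).length := by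
    have hR : ↑R ⊆ Set.Icc 1 (u ++ a :: v).length := fun p hp => by
      simp only [R, Finset.coe_filter, Finset.mem_Ioc] at hp
      exact ⟨hp.1.1, hp.1.2⟩
    simp only [Finset.coe_union, Set.union_subset_iff, length_append_cons_eq u v a b]
    exact ⟨⟨⟨hΓsub, hFsub⟩, by simp⟩, hR⟩
  calc gammaAttr (u ++ b :: v) ≤ (Γ ∪ F ∪ {u.length + 1} ∪ R).card :=
        gammaAttr_le_card hsub (isAttractor_append_cons hs hΓ hF)
    _ ≤ Γ.card + F.card + 1 + R.card := by
        grw [Finset.card_union_le, Finset.card_union_le, Finset.card_union_le,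
          Finset.card_singleton]
    _ ≤ _ := by
        rw [Nat.Ioc_filter_dvd_card_eq_div]
        omega

end

/-- There is a constant `C` such that whenever `T'` is obtained from a string `T`
(of length `n ≥ 1`) by substituting one character, `γ(T') ≤ γ(T) + C·√n`. -/
theorem stmt4 {α : Type*} :
    ∃ C : ℝ, 0 < C ∧ ∀ (u v : List α) (a b : α),
      (gammaAttr (u ++ b :: v) : ℝ) ≤
        gammaAttr (u ++ a :: v) + C * Real.sqrt ((u ++ a :: v).length) := by
  refine ⟨4, by norm_num, fun u v a b => ?_⟩
  set n := (u ++ a :: v).length with hn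
  have hsqrt_pos : 0 < Nat.sqrt n := Nat.sqrt_pos.2 (by simp [hn])
  have hnat : gammaAttr (u ++ b :: v) ≤ gammaAttr (u ++ a :: v) + 4 * Nat.sqrt n := by
    have hbound := gammaAttr_append_cons_le u v a b (Nat.add_one_pos (Nat.sqrt n))
    rw [← hn] at hbound
    have := div_sqrt_add_one_le_sqrt n
    omega
  calc (gammaAttr (u ++ b :: v) : ℝ) ≤ gammaAttr (u ++ a :: v) + 4 * (Nat.sqrt n : ℝ) := by
        exact_mod_cast hnat
    _ ≤ _ := by gcongr; exact Real.nat_sqrt_le_real_sqrt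
end

section
/- Over the alphabet Σ_p = {a_1,...,a_p, b_1,...,b_p, c_1,...,c_p}, the string T = (c_1 c_2 ··· c_p)(a_1 a_1 b_1)(a_2 a_2 b_2)···(a_p a_p b_p)(a_1 b_1 c_1)(a_2 b_2 c_2)···(a_p b_p c_p) of length 7p has LZ78 factorization with exactly 4p phrases, i.e., z_78(T) = 4p. -/
/-- `fs` is the LZ78 factorization of `T`: each phrase is the shortest prefix of
the remaining suffix whose last-character-removed part is an earlier phrase (or is
empty), and which differs from all earlier phrases — except that the trailing
phrase may repeat an earlier phrase. -/
def IsLZ78 {α : Type*} (T : List α) (fs : List (List α)) : Prop :=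
  fs.flatten = T ∧ ∀ (k : ℕ) (hk : k < fs.length),
    fs.get ⟨k, hk⟩ ≠ [] ∧
    ((fs.get ⟨k, hk⟩).dropLast = [] ∨ (fs.get ⟨k, hk⟩).dropLast ∈ fs.take k) ∧
    (k + 1 = fs.length ∨ fs.get ⟨k, hk⟩ ∉ fs.take k)

/-- Encodings of the pairwise distinct characters `a_i`, `b_i`, `c_i`. -/
def chA (i : ℕ) : ℕ := 4 * i
def chB (i : ℕ) : ℕ := 4 * i + 1
def chC (i : ℕ) : ℕ := 4 * i + 2

/-- `T = (c_1⋯c_p)(a_1a_1b_1)⋯(a_pa_pb_p)(a_1b_1c_1)⋯(a_pb_pc_p)`. -/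
def T78 (p : ℕ) : List ℕ :=
  ((List.range p).map fun i => chC (i + 1)) ++
  (((List.range p).map fun i => [chA (i + 1), chA (i + 1), chB (i + 1)]).flatten) ++
  (((List.range p).map fun i => [chA (i + 1), chB (i + 1), chC (i + 1)]).flatten)


def LZrel {α : Type*} (D : List (List α)) (T : List α) (fs : List (List α)) : Prop :=
  fs.flatten = T ∧ ∀ (k : ℕ) (hk : k < fs.length),
    fs.get ⟨k, hk⟩ ≠ [] ∧
    ((fs.get ⟨k, hk⟩).dropLast = [] ∨ (fs.get ⟨k, hk⟩).dropLast ∈ D ++ fs.take k) ∧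
    (k + 1 = fs.length ∨ fs.get ⟨k, hk⟩ ∉ D ++ fs.take k)

def ClosedD {α : Type*} (D : List (List α)) : Prop :=
  ∀ d ∈ D, d.dropLast = [] ∨ d.dropLast ∈ D

lemma prefix_closed {α : Type*} {D : List (List α)} (hD : ClosedD D) :
    ∀ n (d : List α), d.length ≤ n → d ∈ D → ∀ q, q <+: d → q = [] ∨ q ∈ D := by
  intro n
  induction n with
  | zero =>
    intro d hd _ q hq
    left
    have := hq.length_le
    exact List.eq_nil_of_length_eq_zero (by omega)
  | succ n ih =>
    intro d hd hdD q hq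
    by_cases hqd : q = d
    · exact Or.inr (hqd ▸ hdD)
    · have hlt : q.length < d.length := by
        rcases lt_or_eq_of_le hq.length_le with h | h
        · exact h
        · exact absurd (List.IsPrefix.eq_of_length hq h) hqd
      have hpre : q <+: d.dropLast := by
        have h1 : d.dropLast <+: d := List.dropLast_prefix d
        rcases List.prefix_or_prefix_of_prefix hq h1 with h | h
        · exact h
        · have hle := h.length_le
          rw [List.length_dropLast] at hle
          have heq : d.dropLast = q :=
            List.IsPrefix.eq_of_length h (by rw [List.length_dropLast]; omega)
          rw [heq]
      rcases hD d hdD with h | h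
      · rw [h] at hpre
        exact Or.inl (List.prefix_nil.mp hpre)
      · exact ih d.dropLast (by rw [List.length_dropLast]; omega) h q hpre

lemma prefix_closed' {α : Type*} {D : List (List α)} (hD : ClosedD D)
    {d q : List α} (hdD : d ∈ D) (hq : q <+: d) : q = [] ∨ q ∈ D :=
  prefix_closed hD d.length d le_rfl hdD q hq

lemma head_eq {α : Type*} {D : List (List α)} (hD : ClosedD D) {T : List α}
    {f g : List α} {fs gs : List (List α)}
    (hf : LZrel D T (f :: fs)) (hg : LZrel D T (g :: gs)) (hfg : f <+: g) : f = g := by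
  by_contra hne
  obtain ⟨hfT, hfC⟩ := hf
  obtain ⟨hgT, hgC⟩ := hg
  have hf0 := hfC 0 (by simp)
  have hg0 := hgC 0 (by simp)
  simp only [List.get, List.take_zero, List.append_nil] at hf0 hg0
  have hflen : f.length < g.length := by
    rcases lt_or_eq_of_le hfg.length_le with h | h
    · exact h
    · exact absurd (List.IsPrefix.eq_of_length hfg h) hne
  have hfne : f ≠ [] := hf0.1
  have hgdrop : g.dropLast ∈ D := by
    rcases hg0.2.1 with h | h
    · exfalso
      have h1 : g.length - 1 = 0 := by
        rw [← List.length_dropLast, h]; rfl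
      have h2 : 1 ≤ f.length := List.length_pos_iff.mpr hfne
      omega
    · exact h
  have hfd : f <+: g.dropLast := by
    have h1 : g.dropLast <+: g := List.dropLast_prefix g
    rcases List.prefix_or_prefix_of_prefix hfg h1 with h | h
    · exact h
    · have := h.length_le
      rw [List.length_dropLast] at this
      have heq : g.dropLast.length = f.length := by
        rw [List.length_dropLast]; omega
      rw [List.IsPrefix.eq_of_length h heq]
  have hfD : f ∈ D := by
    rcases prefix_closed' hD hgdrop hfd with h | h
    · exact absurd h hfne
    · exact h
  -- so fs = []
  have hfs : fs = [] := by
    rcases hf0.2.2 with h | h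
    · simpa using h.symm
    · exact absurd hfD h
  subst hfs
  simp at hfT
  -- T = f, but g ++ ... = T, so g.length ≤ f.length
  have : g.length ≤ f.length := by
    have : g <+: T := ⟨gs.flatten, by simpa using hgT⟩
    rw [← hfT] at this
    exact this.length_le
  omega

lemma lz_unique {α : Type*} : ∀ (fs gs : List (List α)) (D : List (List α)) (T : List α),
    ClosedD D → LZrel D T fs → LZrel D T gs → fs = gs := by
  intro fs
  induction fs with
  | nil =>
    intro gs D T hD hf hg
    obtain ⟨hfT, _⟩ := hf
    obtain ⟨hgT, hgC⟩ := hg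
    simp at hfT
    cases gs with
    | nil => rfl
    | cons g gs' =>
      exfalso
      have hg0 := hgC 0 (by simp)
      apply hg0.1
      have : g ++ gs'.flatten = [] := by simpa [← hfT] using hgT
      exact (List.append_eq_nil_iff.mp this).1
  | cons f fs' ih =>
    intro gs D T hD hf hg
    cases gs with
    | nil =>
      exfalso
      obtain ⟨hgT, _⟩ := hg
      obtain ⟨hfT, hfC⟩ := hf
      simp at hgT
      apply (hfC 0 (by simp)).1
      have : f ++ fs'.flatten = [] := by simpa [← hgT] using hfT
      exact (List.append_eq_nil_iff.mp this).1
    | cons g gs' =>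
      have hfpre : f <+: T := ⟨fs'.flatten, by simpa using hf.1⟩
      have hgpre : g <+: T := ⟨gs'.flatten, by simpa using hg.1⟩
      have hfg : f = g := by
        rcases List.prefix_or_prefix_of_prefix hfpre hgpre with h | h
        · exact head_eq hD hf hg h
        · exact (head_eq hD hg hf h).symm
      subst hfg
      congr 1
      have htail : gs'.flatten = fs'.flatten := by
        have h1 := hf.1
        have h2 := hg.1
        simp at h1 h2
        rw [← h2] at h1
        exact (List.append_cancel_left h1).symm
      have hD' : ClosedD (D ++ [f]) := by
        intro d hd
        simp at hd
        rcases hd with hd | hd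
        · rcases hD d hd with h | h
          · exact Or.inl h
          · exact Or.inr (by simp [h])
        · subst hd
          have := (hf.2 0 (by simp)).2.1
          simp only [List.get, List.take_zero, List.append_nil] at this
          rcases this with h | h
          · exact Or.inl h
          · exact Or.inr (by simp [h])
      apply ih gs' (D ++ [f]) fs'.flatten hD'
      · refine ⟨rfl, ?_⟩
        intro k hk
        have := hf.2 (k+1) (by simpa using Nat.succ_lt_succ hk)
        simpa [List.take_succ_cons, List.append_assoc, Nat.succ_lt_succ_iff] using this
      · refine ⟨htail, ?_⟩
        intro k hk
        have := hg.2 (k+1) (by simpa using Nat.succ_lt_succ hk)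
        simpa [List.take_succ_cons, List.append_assoc, Nat.succ_lt_succ_iff] using this




def phi (p k : ℕ) : List ℕ :=
  if k < p then [chC (k + 1)]
  else if k < 3 * p then
    (if (k - p) % 2 = 0 then [chA ((k - p) / 2 + 1)]
     else [chA ((k - p) / 2 + 1), chB ((k - p) / 2 + 1)])
  else [chA (k - 3 * p + 1), chB (k - 3 * p + 1), chC (k - 3 * p + 1)]

def fs78 (p : ℕ) : List (List ℕ) := (List.range (4 * p)).map (phi p)

lemma flatten_map_singleton {α β : Type*} (f : α → β) (l : List α) :
    (l.map fun i => [f i]).flatten = l.map f := by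
  induction l with
  | nil => rfl
  | cons a l ih => simp [ih]

lemma seg2 (p : ℕ) :
    ((List.range (2 * p)).map fun j => if j % 2 = 0 then [chA (j / 2 + 1)]
       else [chA (j / 2 + 1), chB (j / 2 + 1)]).flatten =
    ((List.range p).map fun i => [chA (i + 1), chA (i + 1), chB (i + 1)]).flatten := by
  induction p with
  | zero => rfl
  | succ p ih =>
    have h2 : 2 * (p + 1) = (2 * p + 1) + 1 := by ring
    rw [h2, List.range_succ, List.range_succ, List.range_succ]
    have e1 : (2 * p) % 2 = 0 := by omega
    have e2 : (2 * p + 1) % 2 ≠ 0 := by omega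
    have e3 : (2 * p) / 2 = p := by omega
    have e4 : (2 * p + 1) / 2 = p := by omega
    simp [ih, e1, e2, e3, e4]

lemma fs78_flatten (p : ℕ) : (fs78 p).flatten = T78 p := by
  have h4 : 4 * p = p + (2 * p + p) := by ring
  rw [fs78, h4, List.range_add, List.range_add]
  simp only [List.map_append, List.map_map, List.flatten_append]
  rw [T78, List.append_assoc]
  congr 1
  · rw [List.map_congr_left (g := fun i => [chC (i + 1)]) ?_, flatten_map_singleton]
    intro j hj
    rw [List.mem_range] at hj
    simp [phi, hj]
  congr 1
  · rw [List.map_congr_left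
      (g := fun j => if j % 2 = 0 then [chA (j / 2 + 1)] else [chA (j / 2 + 1), chB (j / 2 + 1)]) ?_]
    · exact seg2 p
    · intro j hj
      rw [List.mem_range] at hj
      have h1 : ¬ (p + j < p) := by omega
      have h2 : p + j < 3 * p := by omega
      have h3 : p + j - p = j := by omega
      simp only [Function.comp, phi, h1, h2, h3, if_false, if_true]
  · rw [List.map_congr_left
      (g := fun j => [chA (j + 1), chB (j + 1), chC (j + 1)]) ?_]
    intro j hj
    rw [List.mem_range] at hj
    have h1 : ¬ (p + (2 * p + j) < p) := by omega
    have h2 : ¬ (p + (2 * p + j) < 3 * p) := by omega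
    have h3 : p + (2 * p + j) - 3 * p = j := by omega
    simp only [Function.comp, phi, h1, h2, if_false, h3]

lemma fs78_length (p : ℕ) : (fs78 p).length = 4 * p := by simp [fs78]

lemma fs78_get (p k : ℕ) (hk : k < (fs78 p).length) : (fs78 p).get ⟨k, hk⟩ = phi p k := by
  simp [fs78, List.get_eq_getElem]

lemma fs78_take (p k : ℕ) (hk : k ≤ 4 * p) :
    (fs78 p).take k = (List.range k).map (phi p) := by
  rw [fs78, ← List.map_take, List.take_range, min_eq_left hk]

lemma phi_inj (p : ℕ) : ∀ j k, j < k → k < 4 * p → phi p j ≠ phi p k := by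
  intro j k hjk hk heq
  unfold phi at heq
  split_ifs at heq <;>
    simp [chA, chB, chC] at heq <;>
    omega

lemma fs78_isLZ78 (p : ℕ) (hp : 1 ≤ p) : IsLZ78 (T78 p) (fs78 p) := by
  refine ⟨fs78_flatten p, ?_⟩
  intro k hk
  have hk4 : k < 4 * p := by simpa [fs78_length] using hk
  rw [fs78_get, fs78_take p k (le_of_lt hk4)]
  have hmem : ∀ x, (∃ j, j < k ∧ phi p j = x) → x ∈ (List.range k).map (phi p) := by
    intro x ⟨j, hj, hx⟩
    exact List.mem_map.mpr ⟨j, List.mem_range.mpr hj, hx⟩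
  refine ⟨?_, ?_, Or.inr ?_⟩
  · unfold phi; split_ifs <;> simp
  · unfold phi
    split_ifs with h1 h2 h3
    · simp
    · simp
    · -- [chA, chB] : dropLast = [chA]
      right
      apply hmem
      refine ⟨k - 1, by omega, ?_⟩
      unfold phi
      have e1 : ¬ (k - 1 < p) := by omega
      have e2 : k - 1 < 3 * p := by omega
      have e3 : (k - 1 - p) % 2 = 0 := by omega
      have e4 : (k - 1 - p) / 2 = (k - p) / 2 := by omega
      simp [e1, e2, e3, e4]
    · right
      apply hmem
      refine ⟨p + 2 * (k - 3 * p) + 1, by omega, ?_⟩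
      unfold phi
      have e1 : ¬ (p + 2 * (k - 3 * p) + 1 < p) := by omega
      have e2 : p + 2 * (k - 3 * p) + 1 < 3 * p := by omega
      have e3 : (p + 2 * (k - 3 * p) + 1 - p) % 2 ≠ 0 := by omega
      have e4 : (p + 2 * (k - 3 * p) + 1 - p) / 2 = k - 3 * p := by omega
      simp [e1, e2, e3, e4]
  · intro hcon
    obtain ⟨j, hj, hx⟩ := List.mem_map.mp hcon
    exact phi_inj p j k (List.mem_range.mp hj) hk4 hx

lemma IsLZ78_iff_LZrel {α : Type*} (T : List α) (fs : List (List α)) :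
    IsLZ78 T fs ↔ LZrel [] T fs := by
  simp [IsLZ78, LZrel]

lemma T78_length (p : ℕ) : (T78 p).length = 7 * p := by
  have h : ∀ f g h : ℕ → ℕ,
      (List.map (List.length ∘ fun i => [f i, g i, h i]) (List.range p)) =
      List.replicate p 3 := by
    intro f g h
    rw [List.eq_replicate_iff]
    refine ⟨by simp, ?_⟩
    intro x hx
    obtain ⟨j, _, hj⟩ := List.mem_map.mp hx
    simp [← hj]
  simp [T78, List.length_flatten, List.map_map, h, List.sum_replicate]
  ring

/-- The string `T` of length `7p` has LZ78 factorization with exactly `4p` phrases. -/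
theorem stmt10 (p : ℕ) (hp : 1 ≤ p) :
    (T78 p).length = 7 * p ∧
    (∃ fs, IsLZ78 (T78 p) fs) ∧
    (∀ fs, IsLZ78 (T78 p) fs → fs.length = 4 * p) := by
  refine ⟨T78_length p, ⟨fs78 p, fs78_isLZ78 p hp⟩, ?_⟩
  intro fs hfs
  have hclosed : ClosedD ([] : List (List ℕ)) := by intro d hd; simp at hd
  have heq : fs = fs78 p :=
    lz_unique fs (fs78 p) [] (T78 p) hclosed
      ((IsLZ78_iff_LZrel _ _).mp hfs) ((IsLZ78_iff_LZrel _ _).mp (fs78_isLZ78 p hp))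
  rw [heq, fs78_length]
end

section
/- Over the alphabet Σ_p ∪ {#}, the string T' = (c_1···c_p)(a_1 a_1 b_1)···(a_p a_p b_p) # b_1 c_1 (a_2 b_2 c_2)···(a_p b_p c_p), obtained from T = (c_1···c_p)(a_1 a_1 b_1)···(a_p a_p b_p)(a_1 b_1 c_1)···(a_p b_p c_p) by substituting the character a_1 at position 4p+1 with the fresh character #, has LZ78 factorization with exactly 5p+1 phrases. -/
/-- The fresh character `#`. -/
def chHash : ℕ := 0

/-- `T' = (c_1⋯c_p)(a_1a_1b_1)⋯(a_pa_pb_p) # b_1 c_1 (a_2b_2c_2)⋯(a_pb_pc_p)`,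
obtained from `T` by substituting the character `a_1` at position `4p+1` with `#`. -/
def T78' (p : ℕ) : List ℕ :=
  ((List.range p).map fun i => chC (i + 1)) ++
  (((List.range p).map fun i => [chA (i + 1), chA (i + 1), chB (i + 1)]).flatten) ++
  ([chHash, chB 1, chC 1] ++
    (((List.range (p - 1)).map fun i => [chA (i + 2), chB (i + 2), chC (i + 2)]).flatten))

section

variable {α : Type*}

/-- `LZ78Parse d fs`: `fs` is a valid continuation of an LZ78 factorization whose earlier
phrases are `d`. -/
def LZ78Parse : List (List α) → List (List α) → Prop
  | _, [] => True
  | d, w :: fs =>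
    w ≠ [] ∧ (w.dropLast = [] ∨ w.dropLast ∈ d) ∧ (fs = [] ∨ w ∉ d) ∧ LZ78Parse (d ++ [w]) fs

/-- Like `LZ78Parse`, but the last phrase must be new as well, so that these parses compose. -/
def LZ78FreshParse : List (List α) → List (List α) → Prop
  | _, [] => True
  | d, w :: fs =>
    w ≠ [] ∧ (w.dropLast = [] ∨ w.dropLast ∈ d) ∧ w ∉ d ∧ LZ78FreshParse (d ++ [w]) fs

theorem lz78Parse_iff_forall_get (fs : List (List α)) (d : List (List α)) :
    LZ78Parse d fs ↔ ∀ (k : ℕ) (hk : k < fs.length),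
      fs.get ⟨k, hk⟩ ≠ [] ∧
      ((fs.get ⟨k, hk⟩).dropLast = [] ∨ (fs.get ⟨k, hk⟩).dropLast ∈ d ++ fs.take k) ∧
      (k + 1 = fs.length ∨ fs.get ⟨k, hk⟩ ∉ d ++ fs.take k) := by
  induction fs generalizing d with
  | nil => simp [LZ78Parse]
  | cons w fs ih =>
    simp only [LZ78Parse, ih (d ++ [w])]
    constructor
    · rintro ⟨hw, hdrop, hnew, htail⟩ (_ | k) hk
      · simpa [List.length_eq_zero_iff] using ⟨hw, hdrop, hnew⟩
      · simpa [List.take_succ_cons] using htail k (by simpa using hk)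
    · intro h
      obtain ⟨hw, hdrop, hnew⟩ :
          w ≠ [] ∧ (w.dropLast = [] ∨ w.dropLast ∈ d) ∧ (fs = [] ∨ w ∉ d) := by
        simpa [eq_comm (a := 1), List.length_eq_zero_iff] using h 0 (by simp)
      refine ⟨hw, hdrop, hnew, fun k hk => ?_⟩
      simpa [List.take_succ_cons] using h (k + 1) (by simpa using hk)

theorem isLZ78_iff_lz78Parse (T : List α) (fs : List (List α)) :
    IsLZ78 T fs ↔ fs.flatten = T ∧ LZ78Parse [] fs := by
  simp [IsLZ78, lz78Parse_iff_forall_get]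

def DropLastClosed (d : List (List α)) : Prop :=
  ∀ w ∈ d, w.dropLast = [] ∨ w.dropLast ∈ d

theorem DropLastClosed.append {d : List (List α)} (hd : DropLastClosed d) {w : List α}
    (hw : w.dropLast = [] ∨ w.dropLast ∈ d) : DropLastClosed (d ++ [w]) := by
  intro u hu
  rcases List.mem_append.1 hu with hu | hu
  · exact (hd u hu).imp_right (List.mem_append_left _)
  · rw [List.mem_singleton.1 hu]
    exact hw.imp_right (List.mem_append_left _)

theorem DropLastClosed.mem_of_prefix {d : List (List α)} (hd : DropLastClosed d) {u : List α}
    (hu : u ≠ []) {w : List α} (hpre : u <+: w) (hw : w ∈ d) : u ∈ d := by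
  induction w using List.reverseRecOn with
  | nil => exact absurd (List.prefix_nil.1 hpre) hu
  | append_singleton v a ih =>
    rcases List.prefix_concat_iff.1 hpre with rfl | hpre
    · exact hw
    · have hv : v ≠ [] := fun h => hu (List.prefix_nil.1 (h ▸ hpre))
      have hvd : v ∈ d := by simpa [hv] using hd _ hw
      exact ih hpre hvd

theorem LZ78Parse.length_head_le {d : List (List α)} (hd : DropLastClosed d)
    {w₁ w₂ : List α} {fs gs : List (List α)} (h₁ : LZ78Parse d (w₁ :: fs))
    (h₂ : LZ78Parse d (w₂ :: gs)) (hflat : w₁ ++ fs.flatten = w₂ ++ gs.flatten) :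
    w₂.length ≤ w₁.length := by
  obtain ⟨hw₁, -, hlast₁, -⟩ := h₁
  obtain ⟨-, hdrop₂, -, -⟩ := h₂
  by_contra! hlt
  have hpre : w₁ <+: w₂.dropLast :=
    List.prefix_of_prefix_length_le ⟨fs.flatten, hflat⟩ (List.dropLast_prefix w₂ |>.trans
      (List.prefix_append w₂ gs.flatten)) (by rw [List.length_dropLast]; omega)
  have hw₁d : w₁ ∈ d :=
    hd.mem_of_prefix hw₁ hpre (hdrop₂.resolve_left fun h => hw₁ (List.prefix_nil.1 (h ▸ hpre)))
  obtain rfl : fs = [] := hlast₁.resolve_right (not_not.2 hw₁d)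
  have hlen := congrArg List.length hflat
  simp only [List.flatten_nil, List.append_nil, List.length_append] at hlen
  omega

theorem LZ78Parse.eq_of_flatten_eq {fs gs d : List (List α)} (hd : DropLastClosed d)
    (hfs : LZ78Parse d fs) (hgs : LZ78Parse d gs) (hflat : fs.flatten = gs.flatten) :
    fs = gs := by
  induction fs generalizing gs d with
  | nil =>
    cases gs with
    | nil => rfl
    | cons w gs => exact absurd (List.append_eq_nil_iff.1 hflat.symm).1 hgs.1
  | cons w₁ fs ih =>
    cases gs with
    | nil => exact absurd (List.append_eq_nil_iff.1 hflat).1 hfs.1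
    | cons w₂ gs =>
      rw [List.flatten_cons, List.flatten_cons] at hflat
      obtain rfl : w₁ = w₂ :=
        List.append_inj_left hflat (le_antisymm (hgs.length_head_le hd hfs hflat.symm)
          (hfs.length_head_le hd hgs hflat))
      rw [ih (hd.append hfs.2.1) hfs.2.2.2 hgs.2.2.2 (List.append_cancel_left hflat)]

theorem IsLZ78.unique {T : List α} {fs gs : List (List α)} (hfs : IsLZ78 T fs)
    (hgs : IsLZ78 T gs) : fs = gs := by
  rw [isLZ78_iff_lz78Parse] at hfs hgs
  exact hfs.2.eq_of_flatten_eq (fun _ h => absurd h List.not_mem_nil) hgs.2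
    (hfs.1.trans hgs.1.symm)

theorem LZ78FreshParse.append {d xs ys : List (List α)} (hxs : LZ78FreshParse d xs)
    (hys : LZ78FreshParse (d ++ xs) ys) : LZ78FreshParse d (xs ++ ys) := by
  induction xs generalizing d with
  | nil => simpa using hys
  | cons w xs ih =>
    exact ⟨hxs.1, hxs.2.1, hxs.2.2.1, ih hxs.2.2.2 (by simpa using hys)⟩

theorem LZ78FreshParse.lz78Parse_append {d xs ys : List (List α)} (hxs : LZ78FreshParse d xs)
    (hys : LZ78Parse (d ++ xs) ys) : LZ78Parse d (xs ++ ys) := by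
  induction xs generalizing d with
  | nil => simpa using hys
  | cons w xs ih =>
    exact ⟨hxs.1, hxs.2.1, Or.inr hxs.2.2.1, ih hxs.2.2.2 (by simpa using hys)⟩

theorem lz78FreshParse_flatten_map_range (d : List (List α)) (g : ℕ → List (List α)) (n : ℕ)
    (h : ∀ i < n, LZ78FreshParse (d ++ ((List.range i).map g).flatten) (g i)) :
    LZ78FreshParse d ((List.range n).map g).flatten := by
  induction n with
  | zero => trivial
  | succ n ih =>
    rw [List.range_succ, List.map_append, List.flatten_append]
    exact (ih fun i hi => h i (by omega)).append (by simpa using h n (by omega))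

theorem List.flatten_map_range_append_eq (x y : ℕ → List α) (n : ℕ) :
    ((List.range n).map fun i => x i ++ y i).flatten ++ x n =
      x 0 ++ ((List.range n).map fun i => y i ++ x (i + 1)).flatten := by
  induction n with
  | zero => simp
  | succ n ih => simp [List.range_succ, ← List.append_assoc, ih]

end

@[simp] theorem chA_inj {i j : ℕ} : chA i = chA j ↔ i = j := by simp [chA]
@[simp] theorem chB_inj {i j : ℕ} : chB i = chB j ↔ i = j := by simp [chB]
@[simp] theorem chC_inj {i j : ℕ} : chC i = chC j ↔ i = j := by simp [chC]
@[simp] theorem chA_ne_chB (i j : ℕ) : chA i ≠ chB j := by unfold chA chB; omega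
@[simp] theorem chA_ne_chC (i j : ℕ) : chA i ≠ chC j := by unfold chA chC; omega
@[simp] theorem chB_ne_chC (i j : ℕ) : chB i ≠ chC j := by unfold chB chC; omega
@[simp] theorem chB_ne_chHash (i : ℕ) : chB i ≠ chHash := by simp [chB, chHash]
@[simp] theorem chC_ne_chHash (i : ℕ) : chC i ≠ chHash := by simp [chC, chHash]
@[simp] theorem chA_succ_ne_chHash (i : ℕ) : chA (i + 1) ≠ chHash := by simp [chA, chHash]
@[simp] theorem chB_ne_chA (i j : ℕ) : chB i ≠ chA j := (chA_ne_chB j i).symm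
@[simp] theorem chC_ne_chA (i j : ℕ) : chC i ≠ chA j := (chA_ne_chC j i).symm
@[simp] theorem chC_ne_chB (i j : ℕ) : chC i ≠ chB j := (chB_ne_chC j i).symm
@[simp] theorem chHash_ne_chB (i : ℕ) : chHash ≠ chB i := (chB_ne_chHash i).symm
@[simp] theorem chHash_ne_chC (i : ℕ) : chHash ≠ chC i := (chC_ne_chHash i).symm
@[simp] theorem chHash_ne_chA_succ (i : ℕ) : chHash ≠ chA (i + 1) := (chA_succ_ne_chHash i).symm

def phrasesC (p : ℕ) : List (List ℕ) := ((List.range p).map fun i => [[chC (i + 1)]]).flatten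

def phrasesAAB (p : ℕ) : List (List ℕ) :=
  ((List.range p).map fun i => [[chA (i + 1)], [chA (i + 1), chB (i + 1)]]).flatten

def phrasesHashB : List (List ℕ) := [[chHash], [chB 1]]

def phrasesCAB (q : ℕ) : List (List ℕ) :=
  ((List.range q).map fun i => [[chC (i + 1), chA (i + 2)], [chB (i + 2)]]).flatten

def t78Phrases (p : ℕ) : List (List ℕ) :=
  phrasesC p ++ (phrasesAAB p ++ (phrasesHashB ++ (phrasesCAB (p - 1) ++ [[chC p]])))

theorem lz78FreshParse_phrasesC (p : ℕ) : LZ78FreshParse [] (phrasesC p) :=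
  lz78FreshParse_flatten_map_range _ _ p fun i _ => by simp [LZ78FreshParse]

theorem lz78FreshParse_phrasesAAB (p : ℕ) : LZ78FreshParse (phrasesC p) (phrasesAAB p) :=
  lz78FreshParse_flatten_map_range _ _ p fun i _ => by simp [LZ78FreshParse, phrasesC]

theorem lz78FreshParse_phrasesHashB (p : ℕ) :
    LZ78FreshParse (phrasesC p ++ phrasesAAB p) phrasesHashB := by
  simp [LZ78FreshParse, phrasesHashB, phrasesC, phrasesAAB]

theorem lz78FreshParse_phrasesCAB (p : ℕ) :
    LZ78FreshParse (phrasesC p ++ phrasesAAB p ++ phrasesHashB) (phrasesCAB (p - 1)) :=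
  lz78FreshParse_flatten_map_range _ _ (p - 1) fun i hi => by
    simp [LZ78FreshParse, phrasesHashB, phrasesC, phrasesAAB, Nat.lt_of_lt_pred hi]

theorem lz78Parse_t78Phrases (p : ℕ) : LZ78Parse [] (t78Phrases p) :=
  (lz78FreshParse_phrasesC p).lz78Parse_append <|
    (lz78FreshParse_phrasesAAB p).lz78Parse_append <|
    (lz78FreshParse_phrasesHashB p).lz78Parse_append <|
    (lz78FreshParse_phrasesCAB p).lz78Parse_append <| by simp [LZ78Parse]

theorem flatten_t78Phrases {p : ℕ} (hp : 1 ≤ p) : (t78Phrases p).flatten = T78' p := by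
  have hregroup := List.flatten_map_range_append_eq (fun i => [chC (i + 1)])
    (fun i => [chA (i + 2), chB (i + 2)]) (p - 1)
  rw [Nat.sub_add_cancel hp] at hregroup
  simp only [List.cons_append, List.nil_append] at hregroup
  simp only [t78Phrases, T78', phrasesC, phrasesAAB, phrasesHashB, phrasesCAB, List.flatten_append,
    List.flatten_flatten, List.map_map, Function.comp_def, List.flatten_cons, List.flatten_nil,
    List.append_nil, List.append_assoc, List.cons_append, List.nil_append, hregroup]
  rw [← List.flatMap_def, ← List.map_eq_flatMap]

theorem length_t78Phrases {p : ℕ} (hp : 1 ≤ p) : (t78Phrases p).length = 5 * p + 1 := by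
  simp only [t78Phrases, phrasesC, phrasesAAB, phrasesHashB, phrasesCAB, List.length_append,
    List.length_flatten, List.map_map, Function.comp_def, List.length_cons, List.length_nil,
    List.map_const', List.length_range, List.sum_replicate, smul_eq_mul]
  omega

theorem length_T78' {p : ℕ} (hp : 1 ≤ p) : (T78' p).length = 7 * p := by
  simp only [T78', List.cons_append, List.length_append, List.length_map, List.length_range,
    List.length_flatten, List.map_map, Function.comp_def, List.length_cons, List.length_nil,
    List.map_const', List.sum_replicate, smul_eq_mul]
  omega

/-- The edited string `T'` of length `7p` has LZ78 factorization with exactly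
`5p + 1` phrases. -/
theorem stmt11 (p : ℕ) (hp : 1 ≤ p) :
    (T78' p).length = 7 * p ∧
    (∃ fs, IsLZ78 (T78' p) fs) ∧
    (∀ fs, IsLZ78 (T78' p) fs → fs.length = 5 * p + 1) := by
  have hparse : IsLZ78 (T78' p) (t78Phrases p) :=
    (isLZ78_iff_lz78Parse _ _).2 ⟨flatten_t78Phrases hp, lz78Parse_t78Phrases p⟩
  refine ⟨length_T78' hp, ⟨_, hparse⟩, fun fs hfs => ?_⟩
  rw [hfs.unique hparse, length_t78Phrases hp]
end

section
/- For every edit operation ed ∈ {substitution, insertion, deletion}, the worst-case additive sensitivity of LZ78 satisfies AS_ed(z_78, n) = Ω(n): for infinitely many n there exist strings T of length n and T' with edit distance 1 from T such that z_78(T') − z_78(T) ≥ n/7. -/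
/-!
Write `p = q + 1` and encode the letters as `a_i = 3i+1`, `b_i = 3i+2`, `c_i = 3i+3` (`i ≤ q`).
The string `T = (c_0⋯c_q)(a_0a_0b_0)⋯(a_qa_qb_q)(a_0b_0c_0)⋯(a_qb_qc_q)` parses into the
phrases `c_i`, then `a_i, a_ib_i`, then `a_ib_ic_i`: `4p` phrases. Substituting a fresh letter
for the `a_0` that starts the last block, inserting a second `a_0` there, or deleting it, yields
one phrase (`0`, `a_0a_0`, or none) followed by the suffix `b_0c_0a_1b_1c_1⋯a_qb_qc_q`, which now
parses as `b_0, c_0a_1, b_1, …, c_{q-1}a_q, b_q, c_q`: `2p` phrases in place of the `p` phrases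
`a_ib_ic_i`, hence at least `p = n/7` additional phrases.
-/

namespace LZ78

open List

section ParentsIn

variable {α : Type*}

def ParentsIn (base : List (List α)) : List (List α) → Prop
  | [] => True
  | x :: xs => (x.dropLast = [] ∨ x.dropLast ∈ base) ∧ ParentsIn (base ++ [x]) xs

theorem parentsIn_append {base A B : List (List α)} :
    ParentsIn base (A ++ B) ↔ ParentsIn base A ∧ ParentsIn (base ++ A) B := by
  induction A generalizing base with
  | nil => simp [ParentsIn]
  | cons x A ih => simp [ParentsIn, ih, and_assoc]

theorem ParentsIn.mono {base base' fs : List (List α)} (h : base ⊆ base')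
    (hfs : ParentsIn base fs) : ParentsIn base' fs := by
  induction fs generalizing base base' with
  | nil => trivial
  | cons x xs ih =>
    obtain ⟨hx, hxs⟩ := hfs
    exact ⟨hx.imp_right (@h _), ih (append_subset.mpr
      ⟨Subset.trans h (subset_append_left _ _), subset_append_right _ _⟩) hxs⟩

theorem parentsIn_of_forall {base fs : List (List α)}
    (h : ∀ x ∈ fs, x.dropLast = [] ∨ x.dropLast ∈ base) : ParentsIn base fs := by
  induction fs with
  | nil => trivial
  | cons x xs ih =>
    exact ⟨h x mem_cons_self,
      (ih fun y hy => h y (mem_cons_of_mem x hy)).mono (subset_append_left _ _)⟩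

theorem parentsIn_flatMap {β : Type*} {base : List (List α)} {l : List β}
    {f : β → List (List α)} (h : ∀ b ∈ l, ParentsIn [] (f b)) :
    ParentsIn base (l.flatMap f) := by
  induction l generalizing base with
  | nil => trivial
  | cons b l ih =>
    rw [flatMap_cons, parentsIn_append]
    exact ⟨(h b mem_cons_self).mono (nil_subset _), ih fun c hc => h c (mem_cons_of_mem b hc)⟩

theorem ParentsIn.getElem {base fs : List (List α)} (h : ParentsIn base fs) (k : ℕ)
    (hk : k < fs.length) : fs[k].dropLast = [] ∨ fs[k].dropLast ∈ base ++ fs.take k := by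
  induction fs generalizing base k with
  | nil => simp at hk
  | cons x xs ih =>
    obtain ⟨hx, hxs⟩ := h
    cases k with
    | zero => simpa using hx
    | succ k => simpa using ih hxs k (by simpa using hk)

end ParentsIn

theorem getElem_notMem_take_of_nodup_dropLast {α : Type*} {fs : List (List α)}
    (hnd : fs.dropLast.Nodup) (k : ℕ) (hk : k + 1 < fs.length) : fs[k] ∉ fs.take k := by
  have hpre : (fs.take k ++ [fs[k]]).Nodup := by
    rw [← take_succ_eq_append_getElem]
    refine hnd.sublist ?_
    rw [dropLast_eq_take]
    exact take_sublist_take_left (by omega)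
  exact fun hmem => (nodup_append.mp hpre).2.2 _ hmem _ (mem_singleton_self _) rfl

theorem isLZ78_flatten {α : Type*} {fs : List (List α)} (hne : [] ∉ fs)
    (hpar : ParentsIn [] fs) (hnd : fs.dropLast.Nodup) : IsLZ78 fs.flatten fs := by
  refine ⟨rfl, fun k hk => ⟨?_, ?_, ?_⟩⟩
  · exact fun h => hne (h ▸ getElem_mem hk)
  · simpa using hpar.getElem k hk
  · by_cases h : k + 1 = fs.length
    · exact .inl h
    · exact .inr (getElem_notMem_take_of_nodup_dropLast hnd k (by omega))

def headPhrases (q : ℕ) : List (List ℕ) :=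
  (range (q + 1)).map (fun i => [3 * i + 3]) ++
    (range (q + 1)).flatMap (fun i => [[3 * i + 1], [3 * i + 1, 3 * i + 2]])

def lastBlock (q : ℕ) : List (List ℕ) :=
  (range (q + 1)).map (fun i => [3 * i + 1, 3 * i + 2, 3 * i + 3])

/-- The phrases `b_0, c_0a_1, b_1, …, c_{q-1}a_q, b_q`; the final phrase `c_q` repeats an earlier
one and is kept apart. -/
def tailPhrases (q : ℕ) : List (List ℕ) :=
  (range q).flatMap (fun i => [[3 * i + 2], [3 * i + 3, 3 * i + 4]]) ++ [[3 * q + 2]]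

theorem mem_headPhrases {q : ℕ} {x : List ℕ} :
    x ∈ headPhrases q ↔
      ∃ i ≤ q, x = [3 * i + 3] ∨ x = [3 * i + 1] ∨ x = [3 * i + 1, 3 * i + 2] := by
  simp only [headPhrases, mem_append, mem_map, mem_flatMap, mem_range, mem_cons, not_mem_nil,
    Nat.lt_succ_iff]
  grind

theorem mem_tailPhrases {q : ℕ} {x : List ℕ} :
    x ∈ tailPhrases q ↔
      ∃ i ≤ q, x = [3 * i + 2] ∨ i < q ∧ x = [3 * i + 3, 3 * i + 4] := by
  simp only [tailPhrases, mem_append, mem_flatMap, mem_range, mem_cons, not_mem_nil]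
  grind

theorem length_flatten_headPhrases (q : ℕ) : (headPhrases q).flatten.length = 4 * q + 4 := by
  induction q with
  | zero => rfl
  | succ q ih => simp_all [headPhrases, range_succ]; omega

def prefixString (q : ℕ) : List ℕ := (headPhrases q).flatten

def suffixString (q : ℕ) : List ℕ := (tailPhrases q).flatten ++ [3 * q + 3]

theorem flatten_lastBlock (q : ℕ) : (lastBlock q).flatten = 1 :: suffixString q := by
  induction q with
  | zero => rfl
  | succ q ih =>
    simp only [lastBlock, suffixString, tailPhrases] at ih ⊢
    rw [range_succ, map_append, flatten_append, ih, range_succ, flatMap_append]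
    simp
    omega

theorem nodup_headPhrases (q : ℕ) : (headPhrases q).Nodup := by
  simp only [headPhrases, nodup_append, nodup_flatMap]
  refine ⟨nodup_range.map fun i j h => by simpa using h,
    ⟨by simp, nodup_range.pairwise_of_forall_ne fun i _ j _ hij => ?_⟩, ?_⟩
  · simp [Function.onFun, disjoint_left]; omega
  · simp; grind

theorem nodup_tailPhrases (q : ℕ) : (tailPhrases q).Nodup := by
  simp only [tailPhrases, nodup_append, nodup_flatMap]
  refine ⟨⟨by simp, nodup_range.pairwise_of_forall_ne fun i _ j _ hij => ?_⟩, by simp, ?_⟩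
  · simp [Function.onFun, disjoint_left]; omega
  · simp; grind

theorem notMem_tailPhrases_of_mem_headPhrases {q : ℕ} {x : List ℕ} (hx : x ∈ headPhrases q) :
    x ∉ tailPhrases q := by
  rw [mem_headPhrases] at hx
  rw [mem_tailPhrases]
  grind

theorem parentsIn_headPhrases (q : ℕ) : ParentsIn [] (headPhrases q) := by
  rw [headPhrases, parentsIn_append]
  exact ⟨parentsIn_of_forall (by simp), parentsIn_flatMap fun i _ => by simp [ParentsIn]⟩

theorem length_suffixString (q : ℕ) : (suffixString q).length = 3 * q + 2 := by
  have h := congrArg length (flatten_lastBlock q)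
  simp [lastBlock, Function.comp_def] at h
  omega

def originalPhrases (q : ℕ) : List (List ℕ) := headPhrases q ++ lastBlock q

/-- `m` is what the edit creates between the two parts: `[[0]]`, `[[a_0, a_0]]` or `[]`. -/
def editedPhrases (q : ℕ) (m : List (List ℕ)) : List (List ℕ) :=
  headPhrases q ++ m ++ tailPhrases q ++ [[3 * q + 3]]

theorem length_prefix_cons_suffix (q : ℕ) :
    (prefixString q ++ 1 :: suffixString q).length = 7 * (q + 1) := by
  rw [length_append, length_cons, prefixString, length_flatten_headPhrases,
    length_suffixString]
  ring

theorem length_originalPhrases_add_le (q : ℕ) (m : List (List ℕ)) :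
    (originalPhrases q).length + (q + 1) ≤ (editedPhrases q m).length := by
  simp [originalPhrases, editedPhrases, headPhrases, lastBlock, tailPhrases]
  omega

theorem isLZ78_original (q : ℕ) :
    IsLZ78 (prefixString q ++ 1 :: suffixString q) (originalPhrases q) := by
  rw [prefixString, ← flatten_lastBlock, ← flatten_append]
  refine isLZ78_flatten ?_ ?_ ((nodup_append.mpr ⟨nodup_headPhrases q, ?_, ?_⟩).sublist
    (dropLast_sublist _))
  · simp [headPhrases, lastBlock]
  · refine parentsIn_append.mpr ⟨parentsIn_headPhrases q, parentsIn_of_forall ?_⟩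
    simp only [lastBlock, mem_map, mem_range]
    rintro _ ⟨i, hi, rfl⟩
    exact .inr (mem_headPhrases.mpr ⟨i, by omega, by simp⟩)
  · exact nodup_range.map fun i j h => by simpa using h
  · intro x hx y hy
    rw [mem_headPhrases] at hx
    simp only [lastBlock, mem_map] at hy
    grind

theorem isLZ78_edited (q : ℕ) {m : List (List ℕ)} (hne : [] ∉ m)
    (hpar : ∀ x ∈ m, x.dropLast = [] ∨ x.dropLast ∈ headPhrases q) (hnd : m.Nodup)
    (hfresh : ∀ x ∈ m, x ∉ headPhrases q ∧ x ∉ tailPhrases q) :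
    IsLZ78 (prefixString q ++ m.flatten ++ suffixString q) (editedPhrases q m) := by
  have hflat : (editedPhrases q m).flatten = prefixString q ++ m.flatten ++ suffixString q := by
    simp [editedPhrases, prefixString, suffixString]
  rw [← hflat, editedPhrases]
  refine isLZ78_flatten ?_ ?_ ?_
  · simp only [mem_append, mem_singleton, not_or]
    refine ⟨⟨⟨?_, hne⟩, ?_⟩, by simp⟩ <;> intro h
    · simpa using mem_headPhrases.mp h
    · simpa using mem_tailPhrases.mp h
  · rw [append_assoc, append_assoc, parentsIn_append, nil_append]
    refine ⟨parentsIn_headPhrases q, parentsIn_of_forall fun x hx => ?_⟩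
    simp only [mem_append, mem_singleton] at hx
    rcases hx with hx | hx | rfl
    · exact hpar x hx
    · obtain ⟨i, hi, rfl | ⟨hiq, rfl⟩⟩ := mem_tailPhrases.mp hx
      · simp
      · exact .inr (mem_headPhrases.mpr ⟨i, by omega, by simp⟩)
    · simp
  · rw [dropLast_concat, nodup_append, nodup_append]
    refine ⟨⟨nodup_headPhrases q, hnd, fun x hx y hy => ?_⟩, nodup_tailPhrases q,
      fun x hx y hy => ?_⟩
    · exact fun h => (hfresh y hy).1 (h ▸ hx)
    · rcases mem_append.mp hx with hx | hx
      · exact fun h => notMem_tailPhrases_of_mem_headPhrases hx (h ▸ hy)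
      · exact fun h => (hfresh x hx).2 (h ▸ hy)

end LZ78

open LZ78 in
/-- The additive sensitivity of LZ78 is `Ω(n)` for every edit operation: for every
`p ≥ 1` there are strings `T` of length `n = 7p` and `T'` at edit distance `1`
(for each of substitution, insertion, and deletion) with
`z_78(T') − z_78(T) ≥ p = n / 7`. -/
theorem stmt12 (p : ℕ) (hp : 1 ≤ p) :
    (∃ (u v : List ℕ) (a b : ℕ) (fs fs' : List (List ℕ)), a ≠ b ∧
      (u ++ a :: v).length = 7 * p ∧
      IsLZ78 (u ++ a :: v) fs ∧ IsLZ78 (u ++ b :: v) fs' ∧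
      fs.length + (7 * p) / 7 ≤ fs'.length) ∧
    (∃ (u v : List ℕ) (b : ℕ) (fs fs' : List (List ℕ)),
      (u ++ v).length = 7 * p ∧
      IsLZ78 (u ++ v) fs ∧ IsLZ78 (u ++ b :: v) fs' ∧
      fs.length + (7 * p) / 7 ≤ fs'.length) ∧
    (∃ (u v : List ℕ) (a : ℕ) (fs fs' : List (List ℕ)),
      (u ++ a :: v).length = 7 * p ∧
      IsLZ78 (u ++ a :: v) fs ∧ IsLZ78 (u ++ v) fs' ∧
      fs.length + (7 * p) / 7 ≤ fs'.length) := by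
  obtain ⟨q, rfl⟩ : ∃ q, p = q + 1 := ⟨p - 1, by omega⟩
  have hcount (m : List (List ℕ)) : (originalPhrases q).length + 7 * (q + 1) / 7 ≤
      (editedPhrases q m).length := by
    simpa using length_originalPhrases_add_le q m
  have hsub := isLZ78_edited q (m := [[0]]) (by simp) (by simp) (by simp)
    (by simp [mem_headPhrases, mem_tailPhrases])
  have hins := isLZ78_edited q (m := [[1, 1]]) (by simp) (by simp [mem_headPhrases])
    (by simp) (by simp [mem_headPhrases, mem_tailPhrases])
  have hdel := isLZ78_edited q (m := []) (by simp) (by simp) (by simp) (by simp)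
  refine ⟨⟨_, _, 1, 0, _, _, one_ne_zero, length_prefix_cons_suffix q, isLZ78_original q,
      by simpa using hsub, hcount _⟩,
    ⟨prefixString q ++ [1], _, 1, _, _, by simpa using length_prefix_cons_suffix q,
      by simpa using isLZ78_original q, by simpa using hins, hcount _⟩,
    ⟨_, _, 1, _, _, length_prefix_cons_suffix q, isLZ78_original q,
      by simpa using hdel, hcount _⟩⟩
end

section
/- Let T be a string of length n with string attractor Γ, let T' be obtained from T by substituting the character at position i, and let A ⊆ [1,n] be a set of positions such that every substring of T' having an occurrence in T containing position i also has an occurrence in T' intersecting A. Then Γ ∪ A ∪ {i} is a string attractor of T'. -/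
def OccAt {α : Type*} (W s : List α) (l r : ℕ) : Prop :=
  1 ≤ l ∧ l ≤ r ∧ r ≤ W.length ∧ subStr W l r = s

lemma subStr_subst_eq {α : Type*} (u v : List α) (a b : α) (l r : ℕ)
    (hl : 1 ≤ l) (hlr : l ≤ r)
    (h : r ≤ u.length ∨ u.length + 2 ≤ l) :
    subStr (u ++ a :: v) l r = subStr (u ++ b :: v) l r := by
  unfold subStr
  rcases h with h | h
  · rw [List.take_drop, List.take_drop]
    have hk : l - 1 + (r - l + 1) = r := by omega
    rw [hk, List.take_append_of_le_length h, List.take_append_of_le_length h]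
  · obtain ⟨k, hk⟩ : ∃ k, l - 1 - u.length = k + 1 := ⟨l - 2 - u.length, by omega⟩
    have hd : ∀ c : α, (u ++ c :: v).drop (l - 1) = v.drop k := by
      intro c
      rw [List.drop_append, hk, List.drop_succ_cons,
        List.drop_eq_nil_of_le (by omega), List.nil_append]
    rw [hd a, hd b]

/-- Let `T = u ++ a :: v` with string attractor `Γ`, and `T' = u ++ b :: v` be
obtained by substituting the character at position `i = |u| + 1`. If `A` is a set
of positions such that every substring of `T'` having an occurrence in `T`
containing `i` also has an occurrence in `T'` intersecting `A`, then
`Γ ∪ A ∪ {i}` is a string attractor of `T'`. -/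
theorem stmt15 {α : Type*} (u v : List α) (a b : α) (Γ A : Set ℕ)
    (hΓ : IsAttractor (u ++ a :: v) Γ)
    (hA : ∀ l r : ℕ, 1 ≤ l → l ≤ r → r ≤ (u ++ b :: v).length →
      (∃ l2 r2, OccAt (u ++ a :: v) (subStr (u ++ b :: v) l r) l2 r2 ∧
        l2 ≤ u.length + 1 ∧ u.length + 1 ≤ r2) →
      ∃ l3 r3, OccAt (u ++ b :: v) (subStr (u ++ b :: v) l r) l3 r3 ∧
        ∃ p ∈ A, l3 ≤ p ∧ p ≤ r3) :
    IsAttractor (u ++ b :: v) (Γ ∪ A ∪ {u.length + 1}) := by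
  intro l r hl hlr hr
  set i := u.length + 1 with hi
  have hlen : (u ++ a :: v).length = (u ++ b :: v).length := by simp
  by_cases hcase : l ≤ i ∧ i ≤ r
  · exact ⟨l, r, i, hl, hlr, hr, rfl, Or.inr rfl, hcase.1, hcase.2⟩
  · have havoid : r ≤ u.length ∨ u.length + 2 ≤ l := by omega
    have heq : subStr (u ++ a :: v) l r = subStr (u ++ b :: v) l r :=
      subStr_subst_eq u v a b l r hl hlr havoid
    obtain ⟨l', r', p, hl', hlr', hr', hsub, hp, hpl, hpr⟩ :=
      hΓ l r hl hlr (hlen ▸ hr)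
    by_cases hcase2 : l' ≤ i ∧ i ≤ r'
    · -- occurrence in T containing i
      obtain ⟨l3, r3, hocc, q, hq, hql, hqr⟩ :=
        hA l r hl hlr hr ⟨l', r', ⟨hl', hlr', hr', by rw [hsub, heq]⟩, hcase2.1, hcase2.2⟩
      obtain ⟨h1, h2, h3, h4⟩ := hocc
      exact ⟨l3, r3, q, h1, h2, h3, h4, Or.inl (Or.inr hq), hql, hqr⟩
    · have havoid' : r' ≤ u.length ∨ u.length + 2 ≤ l' := by omega
      have heq' : subStr (u ++ a :: v) l' r' = subStr (u ++ b :: v) l' r' :=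
        subStr_subst_eq u v a b l' r' hl' hlr' havoid'
      exact ⟨l', r', p, hl', hlr', hlen ▸ hr', by rw [← heq', hsub, heq],
        Or.inl (Or.inl hp), hpl, hpr⟩
end
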